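/- The third-order term of the short-time expansion of the decoherence function has the form −G_N(a_1,…,a_{N+1}) · ∑_j [W Γ W y(0)]_j · t³, i.e., the only matrix structure surviving at order t³ is WΓW, with a scalar coefficient depending only on the pulse intervals. -/

import Mathlib

open Matrix Finset

/-- The decoherence function of a qubit under an `N`-pulse dynamical decoupling
sequence with normalized intervals `a`, rate matrix `Γ`, field values `w`, and
initial distribution `y0`. -/
noncomputable def decoherenceFn {N M : ℕ} (Γ : Matrix (Fin M) (Fin M) ℝ)
    (w : Fin M → ℝ) (y0 : Fin M → ℝ) (a : Fin (N + 1) → ℝ) (t : ℝ) : ℂ :=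
  ∑ j, (((List.ofFn fun n : Fin (N + 1) =>
      NormedSpace.exp ((a n * t) •
        ((Γ.map (Complex.ofReal)) +
          ((-1 : ℝ) ^ (n : ℕ)) • (Complex.I • Matrix.diagonal fun j => (w j : ℂ))))).reverse.prod).mulVec
      (fun j => (y0 j : ℂ))) j

open NormedSpace

/-! Write the decoherence function as `Φ (exp (t C₀) ⋯ exp (t C_N))` with
`C_n = a_n Γ + (-1)^n a_n W`, `W = i diag w` and `Φ X = ∑ⱼ (X y₀)ⱼ`. Zero column sums and
`Γ y₀ = 0` mean that `Φ` kills every matrix word beginning or ending with `Γ`. By the Leibniz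
rule the third derivative at `0` of the product is a noncommutative cubic in `Γ` and `W` whose
coefficients depend only on `a`; of its words only `W Γ W` and `W W W` survive `Φ`, and the
coefficient of `W W W` is `(∑ (-1)^n a_n)^3 = 0` by the echo condition. Finally
`W Γ W = -diag w Γ diag w`. -/

theorem ContinuousLinearMap.iteratedDeriv_comp_left {𝕜 E F : Type*} [NontriviallyNormedField 𝕜]
    [NormedAddCommGroup E] [NormedSpace 𝕜 E] [NormedAddCommGroup F] [NormedSpace 𝕜 F]
    (g : E →L[𝕜] F) {f : 𝕜 → E} {x : 𝕜} {n : WithTop ℕ∞} (hf : ContDiffAt 𝕜 n f x) {i : ℕ}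
    (hi : i ≤ n) : iteratedDeriv i (g ∘ f) x = g (iteratedDeriv i f x) := by
  simp only [iteratedDeriv_eq_iteratedFDeriv, g.iteratedFDeriv_comp_left hf hi]
  rfl

section ExpProd

variable {𝔸 : Type*} [NormedRing 𝔸] [NormedAlgebra ℝ 𝔸]

noncomputable def expProd (L : List 𝔸) (t : ℝ) : 𝔸 := (L.map fun C => exp (t • C)).prod

theorem expProd_zero (L : List 𝔸) : expProd L 0 = 1 := by
  simp [expProd]

theorem expProd_cons (C : 𝔸) (L : List 𝔸) :
    expProd (C :: L) = fun t => exp (t • C) * expProd L t :=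
  rfl

theorem expProd_nil : expProd ([] : List 𝔸) = fun _ => 1 :=
  rfl

def pairCombos (Γ W : 𝔸) (ℓ : List (ℝ × ℝ)) : List 𝔸 :=
  ℓ.map fun p => p.1 • Γ + p.2 • W

theorem pairCombos_cons (Γ W : 𝔸) (p : ℝ × ℝ) (ℓ : List (ℝ × ℝ)) :
    pairCombos Γ W (p :: ℓ) = (p.1 • Γ + p.2 • W) :: pairCombos Γ W ℓ :=
  rfl

variable [CompleteSpace 𝔸]

theorem iteratedDeriv_exp_smul (C : 𝔸) (k : ℕ) :
    iteratedDeriv k (fun t : ℝ => exp (t • C)) = fun t => exp (t • C) * C ^ k := by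
  induction k with
  | zero => simp
  | succ k ih =>
    ext t
    rw [iteratedDeriv_succ, ih, pow_succ', ← mul_assoc]
    exact ((hasDerivAt_exp_smul_const C t).mul_const _).deriv

theorem contDiff_exp_smul (C : 𝔸) (n : ℕ∞) : ContDiff ℝ n fun t : ℝ => exp (t • C) :=
  contDiff_of_differentiable_iteratedDeriv fun k _ => by
    rw [iteratedDeriv_exp_smul]
    exact (differentiable_exp_smul_const ℝ C).mul_const _

theorem contDiff_expProd (L : List 𝔸) (n : ℕ∞) : ContDiff ℝ n (expProd L) := by
  induction L with
  | nil => exact contDiff_const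
  | cons C L ih => exact (contDiff_exp_smul C n).mul ih

theorem iteratedDeriv_expProd_cons_zero (C : 𝔸) (L : List 𝔸) (k : ℕ) :
    iteratedDeriv k (expProd (C :: L)) 0 =
      ∑ i ∈ range (k + 1), k.choose i • (C ^ i * iteratedDeriv (k - i) (expProd L) 0) := by
  have h := iteratedDeriv_fun_mul (x := (0 : ℝ)) ((contDiff_exp_smul C k).contDiffAt)
    ((contDiff_expProd L k).contDiffAt)
  simp only [iteratedDeriv_exp_smul, zero_smul, exp_zero, one_mul] at h
  rw [expProd_cons, h]
  simp only [nsmul_eq_mul, mul_assoc]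

/- A pair `(α, β)` stands for the matrix `α Γ + β W`. For a list of them, `coeffΓW` is the
coefficient of the word `Γ W` in the second derivative of the product of exponentials (up to words
ending in `Γ`), and `coeffWΓW` that of `W Γ W` in the third. -/
def coeffΓW : List (ℝ × ℝ) → ℝ
  | [] => 0
  | p :: ℓ => p.1 * p.2 + 2 * p.1 * (ℓ.map Prod.snd).sum + coeffΓW ℓ

def coeffWΓW : List (ℝ × ℝ) → ℝ
  | [] => 0
  | p :: ℓ => p.1 * p.2 ^ 2 + 3 * p.1 * p.2 * (ℓ.map Prod.snd).sum + 3 * p.2 * coeffΓW ℓ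
      + coeffWΓW ℓ

variable {E : Type*} [AddCommGroup E] [Module ℝ E] (F : 𝔸 →ₗ[ℝ] E)
  {Γ : 𝔸} (W : 𝔸)

theorem map_mul_iteratedDeriv_one_expProd (hR : ∀ X, F (X * Γ) = 0) (ℓ : List (ℝ × ℝ))
    (X : 𝔸) :
    F (X * iteratedDeriv 1 (expProd (pairCombos Γ W ℓ)) 0) =
      (ℓ.map Prod.snd).sum • F (X * W) := by
  induction ℓ with
  | nil => simp [pairCombos, expProd_nil, iteratedDeriv_const]
  | cons p ℓ ih =>
    rw [pairCombos_cons, iteratedDeriv_expProd_cons_zero]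
    simp only [sum_range_succ, sum_range_zero, Nat.choose, Nat.reduceSub, Nat.reduceAdd,
      pow_zero, pow_one, one_mul, zero_add, one_nsmul, iteratedDeriv_zero, expProd_zero, mul_one,
      mul_add, map_add, ih, mul_smul_comm, map_smul, hR, smul_zero, List.map_cons, List.sum_cons]
    module

theorem map_mul_iteratedDeriv_two_expProd (hR : ∀ X, F (X * Γ) = 0) (ℓ : List (ℝ × ℝ))
    (X : 𝔸) :
    F (X * iteratedDeriv 2 (expProd (pairCombos Γ W ℓ)) 0) =
      coeffΓW ℓ • F (X * Γ * W) + (ℓ.map Prod.snd).sum ^ 2 • F (X * W * W) := by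
  induction ℓ with
  | nil => simp [pairCombos, expProd_nil, iteratedDeriv_const, coeffΓW]
  | cons p ℓ ih =>
    rw [pairCombos_cons, iteratedDeriv_expProd_cons_zero]
    simp only [sum_range_succ, sum_range_zero, Nat.choose, Nat.reduceSub, Nat.reduceAdd,
      pow_zero, pow_one, one_mul, zero_add, one_nsmul, iteratedDeriv_zero, expProd_zero, mul_one,
      mul_add, map_add, ih, mul_smul_comm, map_nsmul, ← mul_assoc,
      map_mul_iteratedDeriv_one_expProd F W hR]
    simp only [pow_two, mul_add, add_mul, ← mul_assoc, smul_mul_assoc, mul_smul_comm, map_add,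
      map_smul, hR, smul_zero, List.map_cons, List.sum_cons, coeffΓW]
    module

theorem map_iteratedDeriv_three_expProd (hL : ∀ X, F (Γ * X) = 0) (hR : ∀ X, F (X * Γ) = 0)
    (ℓ : List (ℝ × ℝ)) :
    F (iteratedDeriv 3 (expProd (pairCombos Γ W ℓ)) 0) =
      coeffWΓW ℓ • F (W * Γ * W) + (ℓ.map Prod.snd).sum ^ 3 • F (W * W * W) := by
  induction ℓ with
  | nil => simp [pairCombos, expProd_nil, iteratedDeriv_const, coeffWΓW]
  | cons p ℓ ih =>
    have hL_mul : ∀ X Y, F (Γ * X * Y) = 0 := fun X Y => by rw [mul_assoc]; exact hL _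
    rw [pairCombos_cons, iteratedDeriv_expProd_cons_zero]
    simp only [sum_range_succ, sum_range_zero, Nat.choose, Nat.reduceSub, Nat.reduceAdd,
      pow_zero, pow_one, one_mul, zero_add, one_nsmul, iteratedDeriv_zero, expProd_zero, mul_one,
      map_add, ih, map_nsmul, map_mul_iteratedDeriv_one_expProd F W hR]
    simp only [pow_succ, pow_zero, one_mul, mul_add, add_mul, ← mul_assoc, smul_mul_assoc,
      mul_smul_comm, map_add, map_smul, hR, hL, hL_mul, smul_zero,
      map_mul_iteratedDeriv_two_expProd F W hR, List.map_cons, List.sum_cons, coeffWΓW]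
    module

end ExpProd

section SumMulVec

variable {n R : Type*} [Fintype n] [CommSemiring R]

def sumMulVec (v : n → R) : Matrix n n R →ₗ[R] R where
  toFun X := ∑ j, (X *ᵥ v) j
  map_add' X Y := by simp [add_mulVec, sum_add_distrib]
  map_smul' r X := by simp [smul_mulVec, mul_sum]

theorem sumMulVec_apply (v : n → R) (X : Matrix n n R) : sumMulVec v X = ∑ j, (X *ᵥ v) j :=
  rfl

theorem sumMulVec_mul_of_sum_col_eq_zero {A : Matrix n n R} (hA : ∀ k, ∑ j, A j k = 0)
    (v : n → R) (X : Matrix n n R) : sumMulVec v (A * X) = 0 := by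
  have h1 : (1 : n → R) ᵥ* A = 0 := funext fun k => by simpa [vecMul, dotProduct] using hA k
  rw [sumMulVec_apply, ← one_dotProduct, dotProduct_mulVec, ← vecMul_vecMul, h1, zero_vecMul,
    zero_dotProduct]

theorem sumMulVec_mul_of_mulVec_eq_zero {A : Matrix n n R} {v : n → R} (hv : A *ᵥ v = 0)
    (X : Matrix n n R) : sumMulVec v (X * A) = 0 := by
  simp [sumMulVec_apply, ← mulVec_mulVec, hv]

theorem sumMulVec_map {S : Type*} [CommSemiring S] (f : R →+* S) (v : n → R)
    (X : Matrix n n R) :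
    sumMulVec (f ∘ v) (X.map f) = f (sumMulVec v X) := by
  simp [sumMulVec, RingHom.map_mulVec]

end SumMulVec

attribute [local instance] Matrix.linftyOpNormedRing Matrix.linftyOpNormedAlgebra

theorem iteratedDeriv_three_sumMulVec_expProd {n : Type*} [Fintype n] [DecidableEq n]
    {Γ : Matrix n n ℂ} {v : n → ℂ} (hΓ : ∀ k, ∑ j, Γ j k = 0) (hΓv : Γ *ᵥ v = 0)
    (W : Matrix n n ℂ) (ℓ : List (ℝ × ℝ)) :
    iteratedDeriv 3 (fun t => sumMulVec v (expProd (pairCombos Γ W ℓ) t)) 0 =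
      coeffWΓW ℓ • sumMulVec v (W * Γ * W) +
        (ℓ.map Prod.snd).sum ^ 3 • sumMulVec v (W * W * W) := by
  let Φ := ((sumMulVec v).restrictScalars ℝ).toContinuousLinearMap
  have hcomp := Φ.iteratedDeriv_comp_left (x := 0) (i := 3)
    (contDiff_expProd (pairCombos Γ W ℓ) 3).contDiffAt le_rfl
  exact hcomp.trans <| map_iteratedDeriv_three_expProd (Φ : Matrix n n ℂ →ₗ[ℝ] ℂ) W
    (sumMulVec_mul_of_sum_col_eq_zero hΓ v) (sumMulVec_mul_of_mulVec_eq_zero hΓv) ℓ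

def echoPairs {N : ℕ} (a : Fin (N + 1) → ℝ) : List (ℝ × ℝ) :=
  (List.ofFn fun n : Fin (N + 1) => (a n, (-1 : ℝ) ^ (n : ℕ) * a n)).reverse

theorem sum_snd_echoPairs {N : ℕ} (a : Fin (N + 1) → ℝ) :
    ((echoPairs a).map Prod.snd).sum = ∑ n : Fin (N + 1), (-1 : ℝ) ^ (n : ℕ) * a n := by
  simp only [echoPairs, List.map_reverse, List.sum_reverse, List.map_ofFn, List.sum_ofFn,
    Function.comp_def]

theorem decoherenceFn_eq_sumMulVec_expProd {N M : ℕ} (Γ : Matrix (Fin M) (Fin M) ℝ)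
    (w y0 : Fin M → ℝ) (a : Fin (N + 1) → ℝ) (t : ℝ) :
    decoherenceFn Γ w y0 a t = sumMulVec (fun j => (y0 j : ℂ)) (expProd
      (pairCombos (Γ.map (↑)) (Complex.I • diagonal fun j => (w j : ℂ)) (echoPairs a)) t) := by
  have hfactor : ∀ n : Fin (N + 1),
      (a n * t) • (Γ.map (↑) + ((-1 : ℝ) ^ (n : ℕ)) • (Complex.I • diagonal fun j => (w j : ℂ))) =
        t • (a n • Γ.map (↑) +
          ((-1) ^ (n : ℕ) * a n) • Complex.I • diagonal fun j => (w j : ℂ)) :=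
    fun n => by module
  simp only [decoherenceFn, hfactor, echoPairs, expProd, pairCombos, List.map_reverse,
    List.map_ofFn, Function.comp_def]
  -- the two sides differ only in the (definitionally equal) topologies on matrices used by `exp`
  rfl

theorem I_smul_diagonal_mul_mul_I_smul_diagonal {M : ℕ} (Γ : Matrix (Fin M) (Fin M) ℝ)
    (w : Fin M → ℝ) :
    (Complex.I • diagonal fun j => (w j : ℂ)) * Γ.map (↑) *
        (Complex.I • diagonal fun j => (w j : ℂ)) =
      -(diagonal w * Γ * diagonal w).map (↑) := by
  simp only [smul_mul_assoc, mul_smul_comm, smul_smul, Complex.I_mul_I, neg_one_smul, neg_inj]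
  ext i j
  simp [diagonal_mul, mul_diagonal]

theorem third_order_term_structure_general {N : ℕ}
    (a : Fin (N + 1) → ℝ)
    (hecho : ∑ n : Fin (N + 1), (-1 : ℝ) ^ (n : ℕ) * a n = 0) :
    ∃ G : ℝ, ∀ (M : ℕ) (Γ : Matrix (Fin M) (Fin M) ℝ),
      (∀ k, ∑ j, Γ j k = 0) →
      ∀ (w : Fin M → ℝ) (y0 : Fin M → ℝ),
        (∀ j, 0 ≤ y0 j) → (∑ j, y0 j = 1) → Γ.mulVec y0 = 0 →
        iteratedDeriv 3 (fun t => decoherenceFn Γ w y0 a t) 0 =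
          (-(6 * G) * ∑ j, ((Matrix.diagonal w * Γ * Matrix.diagonal w).mulVec y0) j : ℝ) := by
  refine ⟨coeffWΓW (echoPairs a) / 6, fun M Γ hΓ w y0 _ _ hΓy0 => ?_⟩
  have hΓ' : ∀ k, ∑ j, Γ.map (↑) j k = (0 : ℂ) := fun k => by
    simp [← Complex.ofReal_sum, hΓ]
  have hΓy0' : Γ.map (↑) *ᵥ (fun j => (y0 j : ℂ)) = 0 := funext fun j =>
    (RingHom.map_mulVec Complex.ofRealHom Γ y0 j).symm.trans (by simp [hΓy0])
  simp only [decoherenceFn_eq_sumMulVec_expProd]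
  rw [iteratedDeriv_three_sumMulVec_expProd hΓ' hΓy0', sum_snd_echoPairs, hecho,
    I_smul_diagonal_mul_mul_I_smul_diagonal, map_neg,
    show sumMulVec (fun j => (y0 j : ℂ)) ((diagonal w * Γ * diagonal w).map (↑)) = _ from
      sumMulVec_map Complex.ofRealHom y0 _]
  simp only [zero_pow three_ne_zero, zero_smul, add_zero, Complex.real_smul,
    Complex.ofRealHom_eq_coe, sumMulVec_apply]
  push_cast
  ring

/-- The third-order term of the short-time expansion of the decoherence function
has the form `-G_N(a) ⬝ ∑ⱼ [W Γ W y₀]ⱼ ⬝ t³`: the only surviving matrix structure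
at order `t³` is `W Γ W`, with a scalar coefficient `G` depending only on the
pulse intervals `a`. -/
theorem third_order_term_structure {N : ℕ}
    (a : Fin (N + 1) → ℝ) (ha : ∀ n, 0 ≤ a n) (hasum : ∑ n, a n = 1)
    (hecho : ∑ n : Fin (N + 1), (-1 : ℝ) ^ (n : ℕ) * a n = 0) :
    ∃ G : ℝ, ∀ (M : ℕ) (Γ : Matrix (Fin M) (Fin M) ℝ),
      (∀ k, ∑ j, Γ j k = 0) →
      ∀ (w : Fin M → ℝ) (y0 : Fin M → ℝ),
        (∀ j, 0 ≤ y0 j) → (∑ j, y0 j = 1) → Γ.mulVec y0 = 0 →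
        iteratedDeriv 3 (fun t => decoherenceFn Γ w y0 a t) 0 =
          (-(6 * G) * ∑ j, ((Matrix.diagonal w * Γ * Matrix.diagonal w).mulVec y0) j : ℝ) :=
  third_order_term_structure_general a hecho
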